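/- arXiv:1005.4259 — 5 statements merged into one kernel-verified Lean document; each statement's English description precedes it below -/
import Mathlib

section
/- Let K be a field, A an associative unital K-algebra, and J a K-subspace of A such that every element of the radical √J = {a ∈ A | a^m ∈ J for all sufficiently large m} is algebraic over K. Then J is a (two-sided) Mathieu subspace of A if and only if for every idempotent e ∈ J (i.e., e^2 = e), the two-sided ideal of A generated by e is contained in J. -/
/-- `J` is a (two-sided) Mathieu subspace of the `K`-algebra `A`. -/
def IsMathieuSubspace {K A : Type*} [Field K] [Ring A] [Algebra K A]
    (J : Submodule K A) : Prop :=
  ∀ a : A, (∀ m : ℕ, 1 ≤ m → a ^ m ∈ J) →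
    ∀ b c : A, ∃ N : ℕ, 1 ≤ N ∧ ∀ m : ℕ, N ≤ m → b * a ^ m * c ∈ J

/-- The radical of a subset `J` of `A`. -/
def mradical {A : Type*} [Ring A] (J : Set A) : Set A :=
  {a : A | ∃ N : ℕ, 1 ≤ N ∧ ∀ m : ℕ, N ≤ m → a ^ m ∈ J}

private lemma idem_pow {A : Type*} [Monoid A] {e : A} (h : e ^ 2 = e) :
    ∀ m : ℕ, e ^ (m + 1) = e := by
  intro m
  induction m with
  | zero => exact pow_one e
  | succ k ih => rw [pow_succ, ih, ← pow_two, h]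

open Polynomial in
theorem stmt5 {K A : Type*} [Field K] [Ring A] [Algebra K A]
    (J : Submodule K A) (halg : ∀ a ∈ mradical (J : Set A), IsAlgebraic K a) :
    IsMathieuSubspace J ↔
      ∀ e ∈ J, e ^ 2 = e → (TwoSidedIdeal.span {e} : Set A) ⊆ (J : Set A) := by
  constructor
  · intro hM e he hee z hz
    rw [SetLike.mem_coe, TwoSidedIdeal.mem_span_iff_mem_addSubgroup_closure] at hz
    have hpow : ∀ m : ℕ, 1 ≤ m → e ^ m ∈ J := by
      intro m hm
      obtain ⟨k, rfl⟩ : ∃ k, m = k + 1 := ⟨m - 1, by omega⟩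
      rw [idem_pow hee]; exact he
    refine AddSubgroup.closure_induction ?_ (J.zero_mem) (fun x y _ _ hx hy => J.add_mem hx hy)
      (fun x _ hx => J.neg_mem hx) hz
    rintro x ⟨u, ⟨b, -, f, hf, rfl⟩, c, -, rfl⟩
    have hfe : f = e := hf
    obtain ⟨N, hN1, hN⟩ := hM e hpow b c
    have h := hN N le_rfl
    obtain ⟨k, rfl⟩ : ∃ k, N = k + 1 := ⟨N - 1, by omega⟩
    rw [idem_pow hee] at h
    show b * f * c ∈ J
    rw [hfe]; exact h
  · intro hI a ha b c
    have hrad : a ∈ mradical (J : Set A) := ⟨1, le_rfl, fun m hm => ha m hm⟩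
    obtain ⟨p, hp, hpa⟩ := halg a hrad
    obtain ⟨q, hq, hXq⟩ := p.exists_eq_pow_rootMultiplicity_mul_and_not_dvd hp 0
    set n := p.rootMultiplicity 0
    simp only [map_zero, sub_zero] at hq hXq
    have hc0 : q.coeff 0 ≠ 0 := fun h => hXq (X_dvd_iff.mpr h)
    set s : K[X] := (-(q.coeff 0)⁻¹) • q.divX with hs
    set t : A := aeval a s with ht
    have hcomm : Commute a t := by
      have h1 : a * t = aeval a (X * s) := by simp [ht]
      rw [Commute, SemiconjBy, h1, mul_comm (X : K[X]) s]
      simp [ht]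
    have hCc : (C (q.coeff 0)⁻¹ : K[X]) * C (q.coeff 0) = 1 := by
      rw [← C_mul, inv_mul_cancel₀ hc0, C_1]
    have hq2 : p = X ^ n * (X * q.divX + C (q.coeff 0)) := by
      rw [X_mul_divX_add]; exact hq
    have hpoly : (X : K[X]) ^ n = X ^ (n + 1) * s + C (q.coeff 0)⁻¹ * p := by
      rw [hq2, hs, smul_eq_C_mul, map_neg]
      linear_combination (-(X : K[X]) ^ n) * hCc
    have key : a ^ n = a ^ (n + 1) * t := by
      have h0 := congrArg (aeval a) hpoly
      simpa only [map_add, map_mul, map_pow, aeval_X, aeval_C, hpa, mul_zero, add_zero,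
        ← ht] using h0
    set M := n + 1 with hM
    have step : ∀ m : ℕ, n ≤ m → a ^ m = a ^ (m + 1) * t := by
      intro m hm
      have h1 : a ^ m = a ^ (m - n) * a ^ n := by rw [← pow_add]; congr 1; omega
      rw [h1, key, ← mul_assoc, ← pow_add]
      congr 2; omega
    have iter : ∀ j : ℕ, a ^ M = a ^ (M + j) * t ^ j := by
      intro j
      induction j with
      | zero => simp
      | succ k ih =>
        calc a ^ M = a ^ (M + k) * t ^ k := ih
          _ = (a ^ (M + k + 1) * t) * t ^ k := by rw [← step (M + k) (by omega)]
          _ = a ^ (M + (k + 1)) * t ^ (k + 1) := by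
              rw [mul_assoc, ← pow_succ', ← Nat.add_assoc]
    set e : A := a ^ M * t ^ M with hedef
    have htcomm : t ^ M * a ^ M = a ^ M * t ^ M := ((hcomm.pow_pow M M)).symm
    have hee : e ^ 2 = e := by
      have h1 : e * e = (a ^ M * a ^ M) * (t ^ M * t ^ M) := by
        rw [hedef, mul_assoc, ← mul_assoc (t ^ M), htcomm, mul_assoc, ← mul_assoc]
      rw [pow_two, h1, ← pow_add, ← pow_add]
      rw [hedef, iter M, pow_add t, mul_assoc]
    have heJ : e ∈ J := by
      have hgen : ∀ r : K[X], a * aeval a r ∈ J := by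
        intro r
        induction r using Polynomial.induction_on' with
        | add f g hf hg => rw [map_add, mul_add]; exact J.add_mem hf hg
        | monomial k c =>
          rw [aeval_monomial, ← Algebra.smul_def, mul_smul_comm, ← pow_succ']
          exact J.smul_mem c (ha (k + 1) (by omega))
      have h1 : e = a * aeval a (X ^ n * s ^ M) := by
        rw [map_mul, map_pow, map_pow, aeval_X, ← ht, hedef, hM, pow_succ', mul_assoc]
      rw [h1]; exact hgen _
    have hspan := hI e heJ hee
    have haM : a ^ M = a ^ M * e := by
      rw [hedef, ← mul_assoc, ← pow_add, ← iter M]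
    refine ⟨M, by omega, fun m hm => ?_⟩
    have ham : a ^ m = a ^ m * e := by
      have h1 : a ^ m = a ^ (m - M) * a ^ M := by rw [← pow_add]; congr 1; omega
      rw [h1]
      nth_rewrite 1 [haM]
      rw [← mul_assoc]
    have h2 : b * a ^ m * c = (b * a ^ m) * e * c := by
      nth_rewrite 1 [ham]; rw [← mul_assoc]
    rw [h2]
    exact hspan (TwoSidedIdeal.mul_mem_right _ _ _
      (TwoSidedIdeal.mul_mem_left _ _ _ (TwoSidedIdeal.subset_span rfl)))
end

section
/- Let K be a field and A a division algebra over K such that every element of A is algebraic over K. Regard A as a left A-module over itself, and let J be a K-subspace of A with J ≠ 0 and J ≠ A. Then σ(J) = {0} and τ(J) = (A \ J) ∪ {0}. -/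
/-- A `K`-subspace `J` of `A` is a two-sided ideal of `A` if it absorbs
multiplication on both sides. -/
def IsTwoSidedIdealSubspace {K A : Type*} [Field K] [Ring A] [Algebra K A]
    (J : Submodule K A) : Prop :=
  ∀ a ∈ J, ∀ b : A, b * a ∈ J ∧ a * b ∈ J

variable {K A M : Type*} [Field K] [Ring A] [Algebra K A] [AddCommGroup M]
  [Module A M] [Module K M] [IsScalarTower K A M]

/-- For `u ∈ M` and a `K`-subspace `N` of `M`, the `K`-subspace
`(N : u) = {a ∈ A | a • u ∈ N}` of `A`. -/
def colonSub (N : Submodule K M) (u : M) : Submodule K A where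
  carrier := {a : A | a • u ∈ N}
  add_mem' := by
    intro a b ha hb
    simp only [Set.mem_setOf_eq, add_smul] at *
    exact N.add_mem ha hb
  zero_mem' := by
    simp only [Set.mem_setOf_eq, zero_smul]
    exact N.zero_mem
  smul_mem' := by
    intro r a ha
    simp only [Set.mem_setOf_eq] at *
    rw [smul_assoc]
    exact N.smul_mem r ha

/-- The set of stable elements of `N`. -/
def sigmaSet (N : Submodule K M) : Set M :=
  {u : M | IsTwoSidedIdealSubspace (colonSub (A := A) N u)}

/-- The set of quasi-stable elements of `N`. -/
def tauSet (N : Submodule K M) : Set M :=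
  {u : M | IsMathieuSubspace (colonSub (A := A) N u)}

/-! For `u ≠ 0` in a division ring, `(J : u) = J u⁻¹` is a nonzero proper subspace, so it is
not an ideal, and when `u ∈ J` it contains `1` and cannot be Mathieu either. When `u ∉ J`,
algebraicity makes `a⁻¹` a polynomial in `a`, so `a ^ m * u ∈ J` for all `m ≥ 1` forces `a = 0`:
the Mathieu condition on `(J : u)` only ever concerns the element `0`. -/

section Subspaces

variable {K A : Type*} [Field K] [Ring A] [Algebra K A] {S : Submodule K A}

lemma isTwoSidedIdealSubspace_top : IsTwoSidedIdealSubspace (⊤ : Submodule K A) :=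
  fun _ _ _ => ⟨Submodule.mem_top, Submodule.mem_top⟩

lemma IsTwoSidedIdealSubspace.eq_top_of_isUnit_mem (hS : IsTwoSidedIdealSubspace S) {a : A}
    (ha : IsUnit a) (haS : a ∈ S) : S = ⊤ :=
  Submodule.eq_top_iff'.mpr fun b => by
    simpa only [mul_assoc, ha.val_inv_mul, mul_one] using (hS a haS (b * ↑ha.unit⁻¹)).1

lemma isMathieuSubspace_top : IsMathieuSubspace (⊤ : Submodule K A) :=
  fun _ _ _ _ => ⟨1, le_rfl, fun _ _ => Submodule.mem_top⟩

lemma IsMathieuSubspace.eq_top_of_one_mem (hS : IsMathieuSubspace S) (h1 : (1 : A) ∈ S) :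
    S = ⊤ :=
  Submodule.eq_top_iff'.mpr fun b => by
    obtain ⟨N, -, hN⟩ := hS 1 (fun m _ => by rwa [one_pow]) b 1
    simpa using hN N le_rfl

lemma IsMathieuSubspace.of_isNilpotent
    (h : ∀ a : A, (∀ m : ℕ, 1 ≤ m → a ^ m ∈ S) → IsNilpotent a) : IsMathieuSubspace S := by
  intro a ha b c
  obtain ⟨n, hn⟩ := h a ha
  refine ⟨n + 1, Nat.le_add_left 1 n, fun m hm => ?_⟩
  rw [pow_eq_zero_of_le (by omega) hn, mul_zero, zero_mul]
  exact S.zero_mem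

end Subspaces

section Colon

variable {K A M : Type*} [Field K] [Ring A] [Algebra K A] [AddCommGroup M]
  [Module A M] [Module K M] [IsScalarTower K A M]

lemma mem_colonSub {N : Submodule K M} {u : M} {a : A} : a ∈ colonSub N u ↔ a • u ∈ N :=
  Iff.rfl

lemma colonSub_zero (N : Submodule K M) : colonSub (A := A) N 0 = ⊤ :=
  Submodule.eq_top_iff'.mpr fun a => by simp [mem_colonSub]

lemma eq_top_of_colonSub_eq_top {J : Submodule K A} {u : A} (hu : IsUnit u)
    (h : colonSub (A := A) J u = ⊤) : J = ⊤ :=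
  Submodule.eq_top_iff'.mpr fun b => by
    simpa only [smul_eq_mul, mul_assoc, hu.val_inv_mul, mul_one] using
      mem_colonSub.mp (h ▸ Submodule.mem_top : b * ↑hu.unit⁻¹ ∈ colonSub J u)

end Colon

section DivisionRing

variable {K A : Type*} [Field K] [DivisionRing A] [Algebra K A] {J : Submodule K A}

lemma mem_of_forall_pow_mul_mem {a u : A} (ha : IsIntegral K a) (ha0 : a ≠ 0)
    (h : ∀ m : ℕ, 1 ≤ m → a ^ m * u ∈ J) : u ∈ J := by
  have hadjoin : Subalgebra.toSubmodule (Algebra.adjoin K {a}) ≤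
      J.comap (LinearMap.mulRight K (a * u)) := by
    rw [Algebra.adjoin_eq_span, ← Submonoid.powers_eq_closure, Submodule.span_le]
    rintro _ ⟨n, rfl⟩
    simpa [← mul_assoc, ← pow_succ] using h (n + 1) (Nat.le_add_left 1 n)
  simpa [← mul_assoc, inv_mul_cancel₀ ha0] using hadjoin ha.inv_mem_adjoin

lemma colonSub_ne_top (hJ : J ≠ ⊤) {u : A} (hu : u ≠ 0) : colonSub (A := A) J u ≠ ⊤ :=
  fun h => hJ (eq_top_of_colonSub_eq_top (Ne.isUnit hu) h)

lemma sigmaSet_self_eq_singleton_zero (hJ0 : J ≠ ⊥) (hJ : J ≠ ⊤) :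
    sigmaSet (A := A) (M := A) J = {0} := by
  obtain ⟨j, hjJ, hj0⟩ := Submodule.exists_mem_ne_zero_of_ne_bot hJ0
  ext u
  rw [Set.mem_singleton_iff]
  refine ⟨fun hu => by_contra fun hu0 => colonSub_ne_top hJ hu0 ?_, ?_⟩
  · refine IsTwoSidedIdealSubspace.eq_top_of_isUnit_mem hu (a := j * u⁻¹)
      (Ne.isUnit (by simp [hj0, hu0])) ?_
    rwa [mem_colonSub, smul_eq_mul, mul_assoc, inv_mul_cancel₀ hu0, mul_one]
  · rintro rfl
    change IsTwoSidedIdealSubspace (colonSub J 0)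
    rw [colonSub_zero]
    exact isTwoSidedIdealSubspace_top

lemma tauSet_self_eq_compl_union_zero (halg : ∀ a : A, IsAlgebraic K a) (hJ : J ≠ ⊤) :
    tauSet (A := A) (M := A) J = (J : Set A)ᶜ ∪ {0} := by
  ext u
  simp only [Set.mem_union, Set.mem_compl_iff, SetLike.mem_coe, Set.mem_singleton_iff]
  refine ⟨fun hu => ?_, ?_⟩
  · by_contra! h
    exact colonSub_ne_top hJ h.2
      (hu.eq_top_of_one_mem (by rw [mem_colonSub, one_smul]; exact h.1))
  · rintro (huJ | rfl)
    · refine IsMathieuSubspace.of_isNilpotent fun a ha => ?_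
      by_contra hnil
      exact huJ (mem_of_forall_pow_mul_mem (halg a).isIntegral
        (fun h0 => hnil (h0 ▸ IsNilpotent.zero)) ha)
    · change IsMathieuSubspace (colonSub J 0)
      rw [colonSub_zero]
      exact isMathieuSubspace_top

end DivisionRing

theorem stmt15 {K A : Type*} [Field K] [DivisionRing A] [Algebra K A]
    (halg : ∀ a : A, IsAlgebraic K a)
    (J : Submodule K A) (hJ0 : J ≠ ⊥) (hJtop : J ≠ ⊤) :
    sigmaSet (A := A) (M := A) J = {0} ∧
    tauSet (A := A) (M := A) J = (J : Set A)ᶜ ∪ {0} :=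
  ⟨sigmaSet_self_eq_singleton_zero hJ0 hJtop, tauSet_self_eq_compl_union_zero halg hJtop⟩
end

section
/- Let K be a field, n ≥ 2, and regard K^n as a left module over the matrix algebra M_n(K) via the standard action. Let N be a K-subspace of K^n with N ≠ 0 and N ≠ K^n. Then σ(N) = {0} and τ(N) = {0}. -/
variable {K : Type*} [Field K] {n : ℕ}

/-- For `u ∈ Kⁿ` and a `K`-subspace `N` of `Kⁿ`, the `K`-subspace
`(N : u) = {X ∈ Mₙ(K) | X • u ∈ N}` of `Mₙ(K)`, where matrices act on `Kⁿ`
in the standard way. -/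
def matColon (N : Submodule K (Fin n → K)) (u : Fin n → K) :
    Submodule K (Matrix (Fin n) (Fin n) K) where
  carrier := {X : Matrix (Fin n) (Fin n) K | X.mulVec u ∈ N}
  add_mem' := by
    intro a b ha hb
    simp only [Set.mem_setOf_eq, Matrix.add_mulVec] at *
    exact N.add_mem ha hb
  zero_mem' := by
    simp only [Set.mem_setOf_eq, Matrix.zero_mulVec]
    exact N.zero_mem
  smul_mem' := by
    intro c X hX
    simp only [Set.mem_setOf_eq] at *
    rw [Matrix.smul_mulVec]
    exact N.smul_mem c hX

/-- The set of stable elements of `N ⊆ Kⁿ`. -/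
def matSigmaSet (N : Submodule K (Fin n → K)) : Set (Fin n → K) :=
  {u | IsTwoSidedIdealSubspace (matColon N u)}

/-- The set of quasi-stable elements of `N ⊆ Kⁿ`. -/
def matTauSet (N : Submodule K (Fin n → K)) : Set (Fin n → K) :=
  {u | IsMathieuSubspace (matColon N u)}

/-
A Mathieu subspace containing an idempotent `e` contains every `b * e * c`, because `e ^ m = e`.
Let `u ≠ 0` with `(N : u)` Mathieu. If `u ∈ N`, then `1 ∈ (N : u)`, so `(N : u)` is all of
`Mₙ(K)`; as `Mₙ(K)` moves `u` to any vector, `N = Kⁿ`. If `u ∉ N`, pick `0 ≠ w ∈ N` and a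
functional `h` with `h u ≠ 0` and `h w = 1`: the rank-one idempotent `w hᵀ` maps `u` into `N`,
so `(u hᵀ) (w hᵀ) = u hᵀ` lies in `(N : u)`, i.e. `(h u) • u ∈ N`. Both cases contradict the
hypotheses on `N`, so `τ(N) = {0}`, and `σ(N) ⊆ τ(N)` since ideals are Mathieu subspaces.
-/

open Matrix

section RankOne

variable {R ι : Type*} [Fintype ι]

theorem Matrix.exists_dotProduct_ne_zero_and_ne_zero [CommRing R] {u w : ι → R}
    (hu : u ≠ 0) (hw : w ≠ 0) : ∃ h : ι → R, h ⬝ᵥ u ≠ 0 ∧ h ⬝ᵥ w ≠ 0 := by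
  -- otherwise the whole dual space is the union of two proper subgroups, the kernels
  by_contra! hcover
  let ker (x : ι → R) : Submodule R (ι → R) := LinearMap.ker ((dotProductBilin R R).flip x)
  have : ((⊤ : Submodule R (ι → R)) : Set (ι → R)) ⊆ ker u ∪ ker w := fun h _ => by
    by_cases hhu : h ⬝ᵥ u = 0
    · exact Or.inl hhu
    · exact Or.inr (hcover h hhu)
  rcases AddSubgroupClass.subset_union.mp this with hle | hle
  · exact hu (dotProduct_eq_zero u fun h => by rw [dotProduct_comm]; exact hle trivial)
  · exact hw (dotProduct_eq_zero w fun h => by rw [dotProduct_comm]; exact hle trivial)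

theorem Matrix.vecMulVec_mulVec_eq_smul [CommSemiring R] (u v w : ι → R) :
    vecMulVec u v *ᵥ w = (v ⬝ᵥ w) • u := by
  rw [vecMulVec_mulVec, op_smul_eq_smul]

theorem Matrix.isIdempotentElem_vecMulVec [CommSemiring R] {u v : ι → R} (h : v ⬝ᵥ u = 1) :
    IsIdempotentElem (vecMulVec u v) := by
  rw [IsIdempotentElem, vecMulVec_mul_vecMulVec, h, one_smul]

theorem Matrix.exists_mulVec_eq [Field R] {u : ι → R} (hu : u ≠ 0) (v : ι → R) :
    ∃ X : Matrix ι ι R, X *ᵥ u = v := by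
  obtain ⟨h, hhu⟩ : ∃ h : ι → R, h ⬝ᵥ u ≠ 0 := by
    by_contra! H
    exact hu (dotProduct_eq_zero u fun h => by rw [dotProduct_comm, H])
  exact ⟨vecMulVec v ((h ⬝ᵥ u)⁻¹ • h), by
    rw [vecMulVec_mulVec_eq_smul, smul_dotProduct, smul_eq_mul, inv_mul_cancel₀ hhu, one_smul]⟩

end RankOne

section Mathieu

variable {A : Type*} [Ring A] [Algebra K A] {J : Submodule K A}

theorem IsTwoSidedIdealSubspace.isMathieuSubspace (hJ : IsTwoSidedIdealSubspace J) :
    IsMathieuSubspace J :=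
  fun _ ha b c => ⟨1, le_rfl, fun m hm => (hJ _ (hJ _ (ha m hm) b).1 c).2⟩

theorem IsMathieuSubspace.mul_mul_mem_of_isIdempotentElem (hJ : IsMathieuSubspace J) {e : A}
    (he : IsIdempotentElem e) (heJ : e ∈ J) (b c : A) : b * e * c ∈ J := by
  obtain ⟨m, hm, hmem⟩ := hJ e (fun m hm => by rwa [he.pow_eq (by omega)]) b c
  simpa only [he.pow_eq (by omega : m ≠ 0)] using hmem m le_rfl

end Mathieu

variable {N : Submodule K (Fin n → K)}

@[simp]
theorem mem_matColon {u : Fin n → K} {X : Matrix (Fin n) (Fin n) K} :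
    X ∈ matColon N u ↔ X *ᵥ u ∈ N :=
  Iff.rfl

theorem matColon_zero : matColon N 0 = ⊤ :=
  eq_top_iff.mpr fun X _ => by simp

theorem eq_top_of_isMathieuSubspace_matColon_of_mem {u : Fin n → K} (hu : u ≠ 0) (huN : u ∈ N)
    (hM : IsMathieuSubspace (matColon N u)) : N = ⊤ := by
  refine eq_top_iff.mpr fun v _ => ?_
  obtain ⟨X, rfl⟩ := exists_mulVec_eq hu v
  simpa using hM.mul_mul_mem_of_isIdempotentElem IsIdempotentElem.one (by simpa using huN) 1 X

theorem mem_of_isMathieuSubspace_matColon (hN : N ≠ ⊥) {u : Fin n → K} (hu : u ≠ 0)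
    (hM : IsMathieuSubspace (matColon N u)) : u ∈ N := by
  obtain ⟨w, hwN, hw⟩ := Submodule.exists_mem_ne_zero_of_ne_bot hN
  obtain ⟨h, hhu, hhw⟩ := exists_dotProduct_ne_zero_and_ne_zero hu hw
  set h' := (h ⬝ᵥ w)⁻¹ • h
  have hh'w : h' ⬝ᵥ w = 1 := by rw [smul_dotProduct, smul_eq_mul, inv_mul_cancel₀ hhw]
  have hh'u : h' ⬝ᵥ u ≠ 0 := by simp [h', smul_dotProduct, hhu, hhw]
  have heu : vecMulVec w h' ∈ matColon N u := by
    simpa [vecMulVec_mulVec_eq_smul] using N.smul_mem (h' ⬝ᵥ u) hwN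
  have hproj := hM.mul_mul_mem_of_isIdempotentElem (isIdempotentElem_vecMulVec hh'w) heu
    (vecMulVec u h') 1
  rw [mul_one, vecMulVec_mul_vecMulVec, hh'w, one_smul, mem_matColon,
    vecMulVec_mulVec_eq_smul] at hproj
  exact (N.smul_mem_iff hh'u).mp hproj

theorem matTauSet_eq_singleton_zero (hN0 : N ≠ ⊥) (hNtop : N ≠ ⊤) : matTauSet N = {0} := by
  refine Set.eq_singleton_iff_unique_mem.mpr ⟨?_, fun u hM => ?_⟩
  · show IsMathieuSubspace (matColon N 0)
    rw [matColon_zero]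
    exact fun _ _ _ _ => ⟨1, le_rfl, fun _ _ => trivial⟩
  · by_contra hu
    exact hNtop (eq_top_of_isMathieuSubspace_matColon_of_mem hu
      (mem_of_isMathieuSubspace_matColon hN0 hu hM) hM)

theorem stmt16_general (N : Submodule K (Fin n → K))
    (hN0 : N ≠ ⊥) (hNtop : N ≠ ⊤) :
    matSigmaSet N = {0} ∧ matTauSet N = {0} := by
  have hτ := matTauSet_eq_singleton_zero hN0 hNtop
  refine ⟨Set.eq_singleton_iff_unique_mem.mpr ⟨?_, fun u hu => ?_⟩, hτ⟩
  · show IsTwoSidedIdealSubspace (matColon N 0)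
    rw [matColon_zero]
    exact fun _ _ _ => ⟨trivial, trivial⟩
  · exact hτ.subset (IsTwoSidedIdealSubspace.isMathieuSubspace hu)

theorem stmt16 (hn : 2 ≤ n) (N : Submodule K (Fin n → K))
    (hN0 : N ≠ ⊥) (hNtop : N ≠ ⊤) :
    matSigmaSet N = {0} ∧ matTauSet N = {0} :=
  stmt16_general N hN0 hNtop
end

section
/- Let K be a field with char K = 0 or char K = p > n, let n ≥ 2, and regard the matrix algebra M_n(K) as a left module over itself by left multiplication. For X ∈ M_n(K), set H_X := {A ∈ M_n(K) | Tr(AX) = 0}. Then σ(H_X) = {Y ∈ M_n(K) | YX = 0} and τ(H_X) = {Y ∈ M_n(K) | YX = 0, or YX = α·I_n for some nonzero α ∈ K}, where I_n is the identity matrix. -/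
variable {K A M : Type*} [Field K] [Ring A] [Algebra K A] [AddCommGroup M]
  [Module A M] [Module K M] [IsScalarTower K A M]

/-- The `K`-subspace `H_X = {A ∈ Mₙ(K) | Tr(AX) = 0}` of `Mₙ(K)`. -/
def HX {K : Type*} [Field K] {n : ℕ} (X : Matrix (Fin n) (Fin n) K) :
    Submodule K (Matrix (Fin n) (Fin n) K) where
  carrier := {B : Matrix (Fin n) (Fin n) K | (B * X).trace = 0}
  add_mem' := by
    intro a b ha hb
    simp only [Set.mem_setOf_eq, add_mul, Matrix.trace_add] at *
    rw [ha, hb, add_zero]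
  zero_mem' := by
    simp only [Set.mem_setOf_eq, zero_mul, Matrix.trace_zero]
  smul_mem' := by
    intro c B hB
    simp only [Set.mem_setOf_eq] at *
    rw [smul_mul_assoc, Matrix.trace_smul, hB, smul_zero]

open Matrix Module Nat

theorem Finset.eq_zero_of_forall_sum_mul_pow_eq_zero {R : Type*} [CommRing R] [IsDomain R]
    {s : Finset R} {c : R → R} (h : ∀ m, 1 ≤ m → ∑ μ ∈ s, c μ * μ ^ m = 0)
    {μ : R} (hμs : μ ∈ s) (hμ : μ ≠ 0) : c μ = 0 := by
  let e := s.equivFin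
  have hv : (fun i => c (e.symm i) * e.symm i) = 0 := by
    refine Matrix.eq_zero_of_forall_pow_sum_mul_pow_eq_zero
      (f := fun i => (e.symm i : R)) (Subtype.val_injective.comp e.symm.injective) fun k => ?_
    rw [← h (k + 1) (by omega), ← s.sum_coe_sort]
    exact Fintype.sum_equiv e.symm _ _ fun i => by ring
  simpa [hμ] using congr_fun hv (e ⟨μ, hμs⟩)

namespace Module.End

variable {L V : Type*} [Field L] [AddCommGroup V] [Module L V] [FiniteDimensional L V]

theorem trace_restrict_maxGenEigenspace_pow (f : End L V) (μ : L) (m : ℕ) :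
    LinearMap.trace L _
        (f.restrict (f.mapsTo_maxGenEigenspace_of_comm (Commute.refl f) μ) ^ m) =
      μ ^ m * finrank L (f.maxGenEigenspace μ) := by
  induction m with
  | zero => simp
  | succ m ih =>
    rw [pow_succ, mul_eq_comp, LinearMap.trace_comp_eq_mul_of_commute_of_isNilpotent μ
      ((Commute.refl _).pow_left m) (f.isNilpotent_restrict_maxGenEigenspace_sub_algebraMap μ),
      ih]
    ring

theorem trace_pow_eq_sum_finrank_maxGenEigenspace_mul_pow [IsAlgClosed L] (f : End L V)
    {s : Finset L} (hs : ∀ μ, f.maxGenEigenspace μ ≠ ⊥ → μ ∈ s) (m : ℕ) :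
    LinearMap.trace L V (f ^ m) = ∑ μ ∈ s, (finrank L (f.maxGenEigenspace μ) : L) * μ ^ m := by
  classical
  have hfin := WellFoundedGT.finite_ne_bot_of_iSupIndep f.independent_maxGenEigenspace
  have hint := DirectSum.isInternal_submodule_of_iSupIndep_of_iSup_eq_top
    f.independent_maxGenEigenspace f.iSup_maxGenEigenspace_eq_top
  have hmaps (μ : L) := f.mapsTo_maxGenEigenspace_of_comm ((Commute.refl f).pow_right m) μ
  rw [LinearMap.trace_eq_sum_trace_restrict' hint hfin hmaps]
  refine (Finset.sum_congr rfl fun μ _ => ?_).trans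
    (Finset.sum_subset (fun μ hμ => hs μ (by simpa using hμ)) fun μ _ hμ => ?_)
  · rw [← pow_restrict m (f.mapsTo_maxGenEigenspace_of_comm (Commute.refl f) μ),
      trace_restrict_maxGenEigenspace_pow, mul_comm]
  · have hbot : f.maxGenEigenspace μ = ⊥ := by simpa using hμ
    rw [Submodule.finrank_eq_zero.mpr hbot, Nat.cast_zero, zero_mul]

theorem isNilpotent_of_forall_trace_pow_eq_zero [IsAlgClosed L]
    (hchar : ((finrank L V)! : L) ≠ 0) {f : End L V}
    (h : ∀ m, 1 ≤ m → LinearMap.trace L V (f ^ m) = 0) : IsNilpotent f := by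
  obtain ⟨s, hs⟩ : ∃ s : Finset L, ∀ μ, f.maxGenEigenspace μ ≠ ⊥ → μ ∈ s :=
    ⟨(WellFoundedGT.finite_ne_bot_of_iSupIndep f.independent_maxGenEigenspace).toFinset,
      fun μ hμ => by simpa using hμ⟩
  have hbot (μ : L) (hμ : μ ≠ 0) : f.maxGenEigenspace μ = ⊥ := by
    by_contra hne
    have hzero : (finrank L (f.maxGenEigenspace μ) : L) = 0 :=
      Finset.eq_zero_of_forall_sum_mul_pow_eq_zero
        (fun m hm => (trace_pow_eq_sum_finrank_maxGenEigenspace_mul_pow f hs m).symm.trans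
          (h m hm))
        (hs μ hne) hμ
    have hpos : 0 < finrank L (f.maxGenEigenspace μ) :=
      Nat.pos_of_ne_zero (mt Submodule.finrank_eq_zero.mp hne)
    obtain ⟨c, hc⟩ := Nat.dvd_factorial hpos (Submodule.finrank_le _)
    exact hchar (by rw [hc, Nat.cast_mul, hzero, zero_mul])
  have htop : f.maxGenEigenspace 0 = ⊤ := by
    rw [eq_top_iff, ← f.iSup_maxGenEigenspace_eq_top, iSup_le_iff]
    intro μ
    rcases eq_or_ne μ 0 with rfl | hμ
    · exact le_rfl
    · simp [hbot μ hμ]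
  refine ((LinearMap.charpoly_nilpotent_tfae f).out 2 0).mp fun x => ?_
  obtain ⟨k, hk⟩ := (f.mem_maxGenEigenspace 0 x).mp (htop ▸ Submodule.mem_top)
  exact ⟨k, by simpa using hk⟩

end Module.End

namespace Matrix

variable {n K : Type*} [Fintype n] [Field K]

theorem isNilpotent_of_forall_trace_pow_eq_zero [DecidableEq n]
    (hchar : ((Fintype.card n)! : K) ≠ 0) {a : Matrix n n K}
    (h : ∀ m, 1 ≤ m → (a ^ m).trace = 0) : IsNilpotent a := by
  let toClosure := (algebraMap K (AlgebraicClosure K)).mapMatrix (m := n)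
  rw [← IsNilpotent.map_iff (f := toClosure) (map_injective (algebraMap K _).injective),
    ← IsNilpotent.map_iff (toLinAlgEquiv' (R := AlgebraicClosure K) (n := n)).injective]
  refine Module.End.isNilpotent_of_forall_trace_pow_eq_zero ?_ fun m hm => ?_
  · rwa [finrank_fintype_fun_eq_card, ← map_natCast (algebraMap K _), map_ne_zero]
  · rw [← map_pow, ← map_pow]
    refine (trace_toLin'_eq (toClosure (a ^ m))).trans ?_
    simpa [toClosure, trace] using congrArg (algebraMap K (AlgebraicClosure K)) (h m hm)

theorem exists_linearIndependent_vecMul [DecidableEq n] {Z : Matrix n n K}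
    (hZ : ∀ α : K, Z ≠ α • 1) :
    ∃ w : n → K, LinearIndependent K ![w, w ᵥ* Z] := by
  by_contra! h
  obtain ⟨α, hα⟩ := LinearMap.exists_eq_smul_id_of_forall_notLinearIndependent
    (f := Z.vecMulLinear) h
  refine hZ α (ext fun i j => ?_)
  simpa [Pi.single_apply, one_apply, eq_comm] using
    congr_fun (LinearMap.congr_fun hα (Pi.single i 1)) j

theorem exists_dotProduct_eq_one_and_eq_zero {w u : n → K} (h : LinearIndependent K ![w, u]) :
    ∃ v, w ⬝ᵥ v = 1 ∧ u ⬝ᵥ v = 0 := by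
  let M : Matrix (Fin 2) n K := of ![w, u]
  have hrange : LinearMap.range M.mulVecLin = ⊤ := by
    apply Submodule.eq_top_of_finrank_eq
    rw [← rank, rank_eq_finrank_span_row]
    exact (finrank_span_eq_card h).trans (by simp)
  obtain ⟨v, hv⟩ := LinearMap.mem_range.mp (hrange ▸ Submodule.mem_top (x := ![1, 0]))
  exact ⟨v, congr_fun hv 0, congr_fun hv 1⟩

theorem exists_isIdempotentElem_trace_mul_eq_zero_mul_ne_zero [DecidableEq n]
    {Z : Matrix n n K} (hZ : ∀ α : K, Z ≠ α • 1) :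
    ∃ e : Matrix n n K, IsIdempotentElem e ∧ (e * Z).trace = 0 ∧ e * Z ≠ 0 := by
  obtain ⟨w, hw⟩ := exists_linearIndependent_vecMul hZ
  obtain ⟨v, hwv, huv⟩ := exists_dotProduct_eq_one_and_eq_zero hw
  refine ⟨vecMulVec v w, ?_, ?_, ?_⟩
  · rw [IsIdempotentElem, vecMulVec_mul_vecMulVec, hwv, one_smul]
  · rw [vecMulVec_mul, trace_vecMulVec, dotProduct_comm, huv]
  · rw [vecMulVec_mul, Ne, vecMulVec_eq_zero, not_or]
    refine ⟨?_, hw.ne_zero 1⟩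
    rintro rfl
    simp at hwv

end Matrix

theorem IsTwoSidedIdealSubspace.isMathieuSubspace_s17 {K A : Type*} [Field K] [Ring A] [Algebra K A]
    {J : Submodule K A} (hJ : IsTwoSidedIdealSubspace J) : IsMathieuSubspace J :=
  fun _ ha b c => ⟨1, le_rfl, fun m hm => (hJ _ (hJ _ (ha m hm) b).1 c).2⟩

theorem cast_factorial_ne_zero_of_ringChar {K : Type*} [Field K] {n : ℕ}
    (h : ringChar K = 0 ∨ n < ringChar K) : (n ! : K) ≠ 0 := by
  rw [Ne, CharP.cast_eq_zero_iff K (ringChar K)]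
  rcases h with h | h
  · simpa [h] using factorial_ne_zero n
  · have hp := (CharP.char_is_prime_or_zero K (ringChar K)).resolve_right (by omega)
    rw [hp.dvd_factorial]
    omega

section HX

variable {K : Type*} [Field K] {n : ℕ}

theorem mem_HX {X B : Matrix (Fin n) (Fin n) K} : B ∈ HX X ↔ (B * X).trace = 0 := Iff.rfl

theorem colonSub_HX (X Y : Matrix (Fin n) (Fin n) K) :
    colonSub (A := Matrix (Fin n) (Fin n) K) (HX X) Y = HX (Y * X) := by
  ext a
  show ((a * Y) * X).trace = 0 ↔ (a * (Y * X)).trace = 0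
  rw [mul_assoc]

theorem mul_eq_zero_of_isMathieuSubspace_HX {Z : Matrix (Fin n) (Fin n) K}
    (h : IsMathieuSubspace (HX Z)) {e : Matrix (Fin n) (Fin n) K} (he : IsIdempotentElem e)
    (heZ : e ∈ HX Z) : e * Z = 0 := by
  refine ext_iff_trace_mul_left.mpr fun b => ?_
  obtain ⟨N, hN, hmem⟩ := h e (fun m hm => by rwa [he.pow_eq (by omega)]) b 1
  simpa [mem_HX, he.pow_eq (by omega : N ≠ 0), mul_assoc] using hmem N le_rfl

theorem eq_zero_or_eq_smul_one_of_isMathieuSubspace_HX {Z : Matrix (Fin n) (Fin n) K}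
    (h : IsMathieuSubspace (HX Z)) : Z = 0 ∨ ∃ α : K, α ≠ 0 ∧ Z = α • 1 := by
  by_contra! hZ
  have hscalar (α : K) : Z ≠ α • 1 := by
    rcases eq_or_ne α 0 with rfl | hα
    · simpa using hZ.1
    · exact hZ.2 α hα
  obtain ⟨e, he, htr, heZ⟩ := exists_isIdempotentElem_trace_mul_eq_zero_mul_ne_zero hscalar
  exact heZ (mul_eq_zero_of_isMathieuSubspace_HX h he htr)

theorem isMathieuSubspace_HX_zero : IsMathieuSubspace (HX (0 : Matrix (Fin n) (Fin n) K)) :=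
  fun _ _ _ _ => ⟨1, le_rfl, fun _ _ => by simp [mem_HX]⟩

theorem isMathieuSubspace_HX_smul_one (hchar : (n ! : K) ≠ 0) (α : K) :
    IsMathieuSubspace (HX (α • 1 : Matrix (Fin n) (Fin n) K)) := by
  rcases eq_or_ne α 0 with rfl | hα
  · simpa using isMathieuSubspace_HX_zero
  intro a ha b c
  have htrace (m : ℕ) (hm : 1 ≤ m) : (a ^ m).trace = 0 := by
    simpa [mem_HX, hα] using ha m hm
  obtain ⟨k, hk⟩ := isNilpotent_of_forall_trace_pow_eq_zero (by simpa using hchar) htrace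
  exact ⟨k + 1, by omega, fun m hm => by simp [pow_eq_zero_of_le (by omega : k ≤ m) hk]⟩

theorem isMathieuSubspace_HX_iff (hchar : (n ! : K) ≠ 0) (Z : Matrix (Fin n) (Fin n) K) :
    IsMathieuSubspace (HX Z) ↔ Z = 0 ∨ ∃ α : K, α ≠ 0 ∧ Z = α • 1 := by
  refine ⟨eq_zero_or_eq_smul_one_of_isMathieuSubspace_HX, ?_⟩
  rintro (rfl | ⟨α, -, rfl⟩)
  exacts [isMathieuSubspace_HX_zero, isMathieuSubspace_HX_smul_one hchar α]

theorem isTwoSidedIdealSubspace_HX_iff (hn : 2 ≤ n) (Z : Matrix (Fin n) (Fin n) K) :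
    IsTwoSidedIdealSubspace (HX Z) ↔ Z = 0 := by
  refine ⟨fun h => ?_, ?_⟩
  · obtain hZ | ⟨α, hα, rfl⟩ :=
      eq_zero_or_eq_smul_one_of_isMathieuSubspace_HX h.isMathieuSubspace_s17
    · exact hZ
    let i : Fin n := ⟨0, by omega⟩
    let j : Fin n := ⟨1, by omega⟩
    have hij : i ≠ j := by simp [i, j, Fin.ext_iff]
    have := (h (single i j 1) (by simp [mem_HX, hij]) (single j i 1)).1
    simp [mem_HX, hα] at this
  · rintro rfl _ _ _
    simp [mem_HX]

end HX

theorem stmt17 {K : Type*} [Field K] {n : ℕ} (hn : 2 ≤ n)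
    (hchar : ringChar K = 0 ∨ n < ringChar K)
    (X : Matrix (Fin n) (Fin n) K) :
    sigmaSet (A := Matrix (Fin n) (Fin n) K) (M := Matrix (Fin n) (Fin n) K) (HX X) =
      {Y : Matrix (Fin n) (Fin n) K | Y * X = 0} ∧
    tauSet (A := Matrix (Fin n) (Fin n) K) (M := Matrix (Fin n) (Fin n) K) (HX X) =
      {Y : Matrix (Fin n) (Fin n) K | Y * X = 0 ∨
        ∃ α : K, α ≠ 0 ∧ Y * X = α • (1 : Matrix (Fin n) (Fin n) K)} := by
  have hfact := cast_factorial_ne_zero_of_ringChar hchar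
  constructor <;> ext Y
  · exact (colonSub_HX X Y ▸ isTwoSidedIdealSubspace_HX_iff hn (Y * X) :)
  · exact (colonSub_HX X Y ▸ isMathieuSubspace_HX_iff hfact (Y * X) :)
end

section
/- Let K be a field, n ≥ 1, ℓ ≥ 1, α = (α_1, ..., α_ℓ) ∈ K^ℓ, and u_1, ..., u_ℓ pairwise distinct points of K^n. Regard the polynomial algebra K[z_1, ..., z_n] as a module over itself, and set N_{B,α} := {f ∈ K[z_1,...,z_n] | ∑_{i=1}^ℓ α_i f(u_i) = 0}. For β ∈ K^ℓ, let S_β := {i | β_i ≠ 0}, and let Ω_ℓ := {β ∈ K^ℓ | for every nonempty subset C ⊆ S_β, ∑_{i ∈ C} β_i ≠ 0}. For f ∈ K[z_1,...,z_n], let α_{f,B} := (α_1 f(u_1), ..., α_ℓ f(u_ℓ)) ∈ K^ℓ. Then σ(N_{B,α}) = {f ∈ K[z_1,...,z_n] | the set S_{α_{f,B}} has at most one element} and τ(N_{B,α}) = {f ∈ K[z_1,...,z_n] | α_{f,B} ∈ Ω_ℓ}. -/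
variable {K A M : Type*} [Field K] [Ring A] [Algebra K A] [AddCommGroup M]
  [Module A M] [Module K M] [IsScalarTower K A M]

open MvPolynomial in
/-- The `K`-subspace `N_{B,α} = {f | ∑ i, α i * f (u i) = 0}` of `K[z₁,…,zₙ]`. -/
def NBalpha {K : Type*} [Field K] {n ℓ : ℕ} (α : Fin ℓ → K)
    (u : Fin ℓ → (Fin n → K)) : Submodule K (MvPolynomial (Fin n) K) where
  carrier := {f : MvPolynomial (Fin n) K | ∑ i, α i * eval (u i) f = 0}
  add_mem' := by
    intro f g hf hg
    simp only [Set.mem_setOf_eq, map_add, mul_add, Finset.sum_add_distrib] at *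
    rw [hf, hg, add_zero]
  zero_mem' := by
    simp only [Set.mem_setOf_eq, map_zero, mul_zero, Finset.sum_const_zero]
  smul_mem' := by
    intro c f hf
    simp only [Set.mem_setOf_eq, smul_eval] at *
    have h : ∑ i, α i * (c * eval (u i) f) = c * ∑ i, α i * eval (u i) f := by
      rw [Finset.mul_sum]
      exact Finset.sum_congr rfl (fun i _ => by ring)
    rw [h, hf, mul_zero]

open MvPolynomial in
/-- A polynomial whose value is `1` at `x` and `0` at `y`, for `x ≠ y`. -/
noncomputable def sepPoly {K : Type*} [Field K] {n : ℕ} (x y : Fin n → K) :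
    MvPolynomial (Fin n) K :=
  letI := Classical.dec (x = y)
  if h : x = y then 1 else
    C (x (Function.ne_iff.mp h).choose - y (Function.ne_iff.mp h).choose)⁻¹ *
      (X (Function.ne_iff.mp h).choose - C (y (Function.ne_iff.mp h).choose))

open MvPolynomial in
lemma sepPoly_eval_self {K : Type*} [Field K] {n : ℕ} {x y : Fin n → K} (h : x ≠ y) :
    eval x (sepPoly x y) = 1 := by
  have hk := (Function.ne_iff.mp h).choose_spec
  rw [sepPoly]
  rw [dif_neg h]
  simp only [eval_mul, eval_C, eval_sub, eval_X]
  exact inv_mul_cancel₀ (sub_ne_zero.mpr hk)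

open MvPolynomial in
lemma sepPoly_eval_other {K : Type*} [Field K] {n : ℕ} {x y : Fin n → K} (h : x ≠ y) :
    eval y (sepPoly x y) = 0 := by
  rw [sepPoly]
  rw [dif_neg h]
  simp

open MvPolynomial in
lemma exists_interp {K : Type*} [Field K] {n ℓ : ℕ} (u : Fin ℓ → (Fin n → K))
    (hu : Function.Injective u) (v : Fin ℓ → K) :
    ∃ f : MvPolynomial (Fin n) K, ∀ i, eval (u i) f = v i := by
  refine ⟨∑ j, C (v j) * ∏ k ∈ Finset.univ.erase j, sepPoly (u j) (u k), fun i => ?_⟩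
  rw [map_sum, Finset.sum_eq_single i]
  · rw [eval_mul, eval_C, map_prod]
    rw [Finset.prod_congr rfl (fun k hk =>
      sepPoly_eval_self (fun he => (Finset.mem_erase.mp hk).1 (hu he.symm)))]
    simp
  · intro j _ hji
    rw [eval_mul, map_prod]
    rw [Finset.prod_eq_zero (Finset.mem_erase.mpr ⟨hji.symm, Finset.mem_univ i⟩)
      (sepPoly_eval_other (fun he => hji (hu he)))]
    simp
  · intro h; exact absurd (Finset.mem_univ i) h

/-- Vandermonde-type lemma: if `∑ w ∈ V, c w * w ^ m = 0` for all `m ≥ 1` and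
`0 ∉ V`, then all coefficients vanish. -/
lemma vand {K : Type*} [Field K] :
    ∀ V : Finset K, (0 : K) ∉ V → ∀ c : K → K,
      (∀ m : ℕ, 1 ≤ m → ∑ w ∈ V, c w * w ^ m = 0) → ∀ v ∈ V, c v = 0 := by
  classical
  intro V
  induction V using Finset.strongInduction with
  | _ V ih =>
    intro h0 c h v hv
    have herase : ∀ w ∈ V.erase v, c w * (w - v) = 0 := by
      refine ih (V.erase v) (Finset.erase_ssubset hv)
        (fun h' => h0 (Finset.mem_of_mem_erase h')) (fun w => c w * (w - v)) ?_
      intro m hm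
      have h1 := h m hm
      have h2 := h (m + 1) (by omega)
      have e1 : ∑ w ∈ V.erase v, c w * (w - v) * w ^ m
          = ∑ w ∈ V, c w * (w - v) * w ^ m := by
        apply Finset.sum_erase
        ring
      have e2 : ∑ w ∈ V, c w * (w - v) * w ^ m
          = (∑ w ∈ V, c w * w ^ (m + 1)) - v * ∑ w ∈ V, c w * w ^ m := by
        rw [Finset.mul_sum, ← Finset.sum_sub_distrib]
        exact Finset.sum_congr rfl (fun w _ => by ring)
      rw [e1, e2, h1, h2, mul_zero, sub_zero]
    have hcv : ∀ w ∈ V, w ≠ v → c w = 0 := by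
      intro w hw hwv
      rcases mul_eq_zero.mp (herase w (Finset.mem_erase.mpr ⟨hwv, hw⟩)) with h' | h'
      · exact h'
      · exact absurd (sub_eq_zero.mp h') hwv
    have h1 := h 1 le_rfl
    rw [Finset.sum_eq_single v (fun w hw hwv => by rw [hcv w hw hwv, zero_mul])
      (fun h' => absurd hv h')] at h1
    have hv0 : v ≠ 0 := fun h' => h0 (h' ▸ hv)
    rcases mul_eq_zero.mp h1 with h' | h'
    · exact h'
    · exact absurd (pow_eq_zero_iff one_ne_zero |>.mp h') hv0

open MvPolynomial in
lemma mem_colon_iff {K : Type*} [Field K] {n ℓ : ℕ} (α : Fin ℓ → K)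
    (u : Fin ℓ → (Fin n → K)) (f g : MvPolynomial (Fin n) K) :
    g ∈ colonSub (A := MvPolynomial (Fin n) K) (NBalpha α u) f ↔
      ∑ i, (α i * eval (u i) f) * eval (u i) g = 0 := by
  have h1 : g ∈ colonSub (A := MvPolynomial (Fin n) K) (NBalpha α u) f ↔
      ∑ i, α i * eval (u i) (g * f) = 0 := Iff.rfl
  rw [h1]
  have key : ∑ i, α i * eval (u i) (g * f)
      = ∑ i, (α i * eval (u i) f) * eval (u i) g :=
    Finset.sum_congr rfl (fun i _ => by rw [map_mul]; ring)
  rw [key]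

open MvPolynomial in
theorem stmt18 {K : Type*} [Field K] {n ℓ : ℕ} (hn : 1 ≤ n) (hl : 1 ≤ ℓ)
    (α : Fin ℓ → K) (u : Fin ℓ → (Fin n → K)) (hu : Function.Injective u) :
    sigmaSet (A := MvPolynomial (Fin n) K) (M := MvPolynomial (Fin n) K)
        (NBalpha α u) =
      {f : MvPolynomial (Fin n) K |
        {i : Fin ℓ | α i * eval (u i) f ≠ 0}.Subsingleton} ∧
    tauSet (A := MvPolynomial (Fin n) K) (M := MvPolynomial (Fin n) K)
        (NBalpha α u) =
      {f : MvPolynomial (Fin n) K | ∀ C : Finset (Fin ℓ), C.Nonempty →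
        (∀ i ∈ C, α i * eval (u i) f ≠ 0) → ∑ i ∈ C, α i * eval (u i) f ≠ 0} := by
  classical
  constructor
  · -- sigma part
    ext f
    set β : Fin ℓ → K := fun i => α i * eval (u i) f with hβ
    constructor
    · -- sigma ⊆ subsingleton
      intro hf
      intro i hi j hj
      by_contra hij
      simp only [Set.mem_setOf_eq] at hi hj
      obtain ⟨g, hg⟩ := exists_interp u hu
        (fun k => if k = i then β j else if k = j then -(β i) else 0)
      obtain ⟨b, hb⟩ := exists_interp u hu (fun k => if k = i then 1 else 0)
      have hgmem : g ∈ colonSub (A := MvPolynomial (Fin n) K) (NBalpha α u) f := by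
        rw [mem_colon_iff]
        rw [← Finset.sum_subset (Finset.subset_univ ({i, j} : Finset (Fin ℓ)))]
        · rw [Finset.sum_pair hij, hg, hg]
          simp [hij, Ne.symm hij]
          ring
        · intro k _ hk
          simp only [Finset.mem_insert, Finset.mem_singleton, not_or] at hk
          rw [hg]
          simp [hk.1, hk.2]
      have hbg := (hf g hgmem b).1
      rw [mem_colon_iff] at hbg
      rw [Finset.sum_eq_single i (fun k _ hk => by
          rw [map_mul, hb]; simp [hk]) (fun h' => absurd (Finset.mem_univ i) h')] at hbg
      rw [map_mul, hb, hg] at hbg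
      simp only [if_pos rfl] at hbg
      exact hj (by
        have := mul_eq_zero.mp hbg
        rcases this with h' | h'
        · exact absurd h' hi
        · rcases mul_eq_zero.mp h' with h'' | h''
          · exact absurd h'' one_ne_zero
          · exact h'')
    · -- subsingleton ⊆ sigma
      intro hf
      simp only [Set.mem_setOf_eq] at hf
      intro g hg b
      rw [mem_colon_iff] at hg
      have key : ∀ k, β k ≠ 0 → eval (u k) g = 0 := by
        intro k hk
        have : ∀ j ∈ Finset.univ, j ≠ k → β j * eval (u j) g = 0 := by
          intro j _ hjk
          by_cases hj : β j = 0
          · rw [hj, zero_mul]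
          · exact absurd (hf hj hk) hjk
        rw [Finset.sum_eq_single k this (fun h' => absurd (Finset.mem_univ k) h')] at hg
        exact (mul_eq_zero.mp hg).resolve_left hk
      refine ⟨?_, ?_⟩ <;> rw [mem_colon_iff] <;> refine Finset.sum_eq_zero (fun k _ => ?_)
      · by_cases hk : β k = 0
        · rw [show α k * eval (u k) f = β k from rfl, hk, zero_mul]
        · rw [map_mul, key k hk, mul_zero, mul_zero]
      · by_cases hk : β k = 0
        · rw [show α k * eval (u k) f = β k from rfl, hk, zero_mul]
        · rw [map_mul, key k hk, zero_mul, mul_zero]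
  · -- tau part
    ext f
    set β : Fin ℓ → K := fun i => α i * eval (u i) f with hβ
    constructor
    · -- tau ⊆ condition
      intro hf
      intro C hCne hCnz hsum
      obtain ⟨a, ha⟩ := exists_interp u hu (fun k => if k ∈ C then 1 else 0)
      obtain ⟨i₀, hi₀⟩ := hCne
      obtain ⟨b, hb⟩ := exists_interp u hu (fun k => if k = i₀ then 1 else 0)
      have hpow : ∀ m : ℕ, 1 ≤ m →
          a ^ m ∈ colonSub (A := MvPolynomial (Fin n) K) (NBalpha α u) f := by
        intro m hm
        rw [mem_colon_iff]
        have : ∀ k, β k * eval (u k) (a ^ m) = if k ∈ C then β k else 0 := by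
          intro k
          rw [map_pow, ha]
          by_cases hk : k ∈ C
          · simp [hk]
          · simp [hk, zero_pow (by omega : m ≠ 0)]
        calc ∑ k, β k * eval (u k) (a ^ m) = ∑ k, if k ∈ C then β k else 0 :=
              Finset.sum_congr rfl (fun k _ => this k)
          _ = ∑ k ∈ C, β k := by rw [Finset.sum_ite_mem, Finset.univ_inter]
          _ = 0 := hsum
      obtain ⟨N, hN1, hN⟩ := hf a hpow b 1
      have hmem := hN N le_rfl
      rw [mem_colon_iff] at hmem
      rw [Finset.sum_eq_single i₀ (fun k _ hk => by
          rw [mul_one, map_mul, hb]; simp [hk]) (fun h' => absurd (Finset.mem_univ i₀) h')]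
        at hmem
      rw [mul_one, map_mul, hb, map_pow, ha] at hmem
      simp only [if_pos rfl, hi₀, if_true, one_mul, one_pow, mul_one] at hmem
      exact hCnz i₀ hi₀ hmem
    · -- condition ⊆ tau
      intro hf
      simp only [Set.mem_setOf_eq] at hf
      intro a hpow b c
      set w : Fin ℓ → K := fun k => eval (u k) a with hw
      have key : ∀ k, β k ≠ 0 → w k = 0 := by
        by_contra hkey
        push_neg at hkey
        obtain ⟨k₀, hk₀β, hk₀w⟩ := hkey
        set t : Finset (Fin ℓ) := Finset.univ.filter (fun k => β k ≠ 0 ∧ w k ≠ 0) with ht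
        set V : Finset K := t.image w with hV
        have h0V : (0 : K) ∉ V := by
          intro h'
          obtain ⟨k, hk, hk0⟩ := Finset.mem_image.mp h'
          exact (Finset.mem_filter.mp hk).2.2 hk0
        set c' : K → K := fun x => ∑ k ∈ t.filter (fun k => w k = x), β k with hc'
        have hsum : ∀ m : ℕ, 1 ≤ m → ∑ x ∈ V, c' x * x ^ m = 0 := by
          intro m hm
          have hpm := hpow m hm
          rw [mem_colon_iff] at hpm
          have e0 : ∑ k, β k * eval (u k) (a ^ m) = ∑ k, β k * w k ^ m :=
            Finset.sum_congr rfl (fun k _ => by rw [map_pow])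
          rw [e0] at hpm
          have e1 : ∑ x ∈ V, c' x * x ^ m
              = ∑ x ∈ V, ∑ k ∈ t.filter (fun k => w k = x), β k * w k ^ m := by
            refine Finset.sum_congr rfl (fun x _ => ?_)
            rw [hc', Finset.sum_mul]
            refine Finset.sum_congr rfl (fun k hk => ?_)
            rw [(Finset.mem_filter.mp hk).2]
          have e2 : ∑ x ∈ V, ∑ k ∈ t.filter (fun k => w k = x), β k * w k ^ m
              = ∑ k ∈ t, β k * w k ^ m :=
            Finset.sum_fiberwise_of_maps_to (fun k hk => Finset.mem_image_of_mem w hk) _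
          have e3 : ∑ k ∈ t, β k * w k ^ m = ∑ k, β k * w k ^ m := by
            apply Finset.sum_subset (Finset.subset_univ t)
            intro k _ hk
            rw [ht, Finset.mem_filter, not_and, not_and] at hk
            by_cases hkβ : β k = 0
            · rw [hkβ, zero_mul]
            · rw [not_not.mp (hk (Finset.mem_univ k) hkβ),
                zero_pow (by omega : m ≠ 0), mul_zero]
          rw [e1, e2, e3, hpm]
        have hk₀t : k₀ ∈ t := Finset.mem_filter.mpr ⟨Finset.mem_univ k₀, hk₀β, hk₀w⟩
        have hcv := vand V h0V c' hsum (w k₀) (Finset.mem_image_of_mem w hk₀t)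
        set F : Finset (Fin ℓ) := t.filter (fun k => w k = w k₀) with hF
        have hFne : F.Nonempty := ⟨k₀, Finset.mem_filter.mpr ⟨hk₀t, rfl⟩⟩
        have hFnz : ∀ k ∈ F, β k ≠ 0 := fun k hk =>
          (Finset.mem_filter.mp (Finset.mem_filter.mp hk).1).2.1
        exact hf F hFne hFnz hcv
      refine ⟨1, le_rfl, fun m hm => ?_⟩
      rw [mem_colon_iff]
      apply Finset.sum_eq_zero
      intro k _
      by_cases hk : β k = 0
      · rw [show α k * eval (u k) f = β k from rfl, hk, zero_mul]
      · rw [map_mul, map_mul, map_pow, show eval (u k) a = w k from rfl, key k hk,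
          zero_pow (by omega : m ≠ 0), mul_zero, zero_mul, mul_zero]
end
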